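/- arXiv:0905.2680 — 2 statements merged into one kernel-verified Lean document; each statement's English description precedes it below -/
import Mathlib

section
/- Let Φ = {log φ_n} be an asymptotically sub-additive potential on a TDS (X,T). Suppose (ν_n) is a sequence of Borel probability measures on X and μ_n := (1/n) Σ_{i=0}^{n-1} ν_n ∘ T^{-i}. If μ_{n_i} converges weakly* to μ for some subsequence (n_i), then μ is T-invariant and limsup_{i→∞} (1/n_i) ∫ log φ_{n_i} dν_{n_i} ≤ Φ_*(μ). -/
open MeasureTheory Filter Topology Set
open scoped ENNReal NNReal

noncomputable section

/-- Extended logarithm of a nonnegative real number, with `elog 0 = ⊥`. -/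
def elog (r : ℝ) : EReal := if r = 0 then ⊥ else ((Real.log r : ℝ) : EReal)

/-- Extended logarithm on `ℝ≥0∞`. -/
def elogENN (a : ℝ≥0∞) : EReal :=
  if a = 0 then ⊥ else if a = ⊤ then ⊤ else ((Real.log a.toReal : ℝ) : EReal)

variable {X : Type*} [MetricSpace X] [CompactSpace X] [MeasurableSpace X] [BorelSpace X]

/-- A potential: each `φ n` is continuous and nonnegative.  The potential itself is
the sequence `{log φ n}` with values in `ℝ ∪ {-∞}`. -/
def IsPotential (φ : ℕ → X → ℝ) : Prop :=
  ∀ n, Continuous (φ n) ∧ ∀ x, 0 ≤ φ n x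

/-- Sub-additive potential: `φ (n+m) x ≤ φ n x * φ m (T^[n] x)`, i.e.
`log φ (n+m) ≤ log φ n + log φ m ∘ T^n`. -/
def IsSubAdditivePot (T : X → X) (φ : ℕ → X → ℝ) : Prop :=
  IsPotential φ ∧ ∀ n m x, φ (n + m) x ≤ φ n x * φ m (T^[n] x)

/-- `limsup_n (1/n) sup_x |log φ n x - log ψ n x| ≤ ε`, with the convention
`log 0 - log 0 = 0` (and `|log 0 - log c| = ∞` for `c ≠ 0`). -/
def ApproxAtScale (φ ψ : ℕ → X → ℝ) (ε : ℝ) : Prop :=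
  ∀ ε' > ε, ∀ᶠ n : ℕ in atTop, ∀ x : X,
    (φ n x = 0 ↔ ψ n x = 0) ∧
    (φ n x ≠ 0 → |Real.log (φ n x) - Real.log (ψ n x)| ≤ n * ε')

/-- Asymptotically sub-additive potential. -/
def IsAsympSubAdditive (T : X → X) (φ : ℕ → X → ℝ) : Prop :=
  IsPotential φ ∧ ∀ ε > 0, ∃ ψ : ℕ → X → ℝ, IsSubAdditivePot T ψ ∧ ApproxAtScale φ ψ ε

/-- Asymptotically additive potential (via approximation by genuinely additive
potentials `ψ n x = exp (∑_{i<n} g (T^i x))`). -/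
def IsAsympAdditive (T : X → X) (φ : ℕ → X → ℝ) : Prop :=
  IsPotential φ ∧ ∀ ε > 0, ∃ g : X → ℝ, Continuous g ∧
    ApproxAtScale φ (fun n x => Real.exp (∑ i ∈ Finset.range n, g (T^[i] x))) ε

/-- `∫ log f dμ ∈ ℝ ∪ {-∞}`, as the infimum of the integrals of the truncations
`log (max f (exp (-R)))`. -/
def elogInt (μ : Measure X) (f : X → ℝ) : EReal :=
  ⨅ R : ℕ, ((∫ x, Real.log (max (f x) (Real.exp (-(R : ℝ)))) ∂μ : ℝ) : EReal)

/-- `Φ_*(μ) = lim_n (1/n) ∫ log φ n dμ` (written as a `limsup`, which equals the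
limit whenever the latter exists). -/
def potStar (μ : Measure X) (φ : ℕ → X → ℝ) : EReal :=
  limsup (fun n : ℕ => (((n : ℝ)⁻¹ : ℝ) : EReal) * elogInt μ (φ n)) atTop

/-- The sequence `(1/n) log φ n x`, whose limit (when it exists) is the Lyapunov
exponent `λ_Φ(x)`. -/
def lyapSeq (φ : ℕ → X → ℝ) (x : X) : ℕ → EReal :=
  fun n => (((n : ℝ)⁻¹ : ℝ) : EReal) * elog (φ n x)

/-- The `α`-level set `E_Φ(α) = {x : λ_Φ(x) = α}`. -/
def levelSet (φ : ℕ → X → ℝ) (α : EReal) : Set X :=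
  {x | Tendsto (lyapSeq φ x) atTop (𝓝 α)}

/-- `β̄(Φ) = limsup_n (1/n) sup_x log φ n x`. -/
def betaBar (φ : ℕ → X → ℝ) : EReal :=
  limsup (fun n : ℕ => (((n : ℝ)⁻¹ : ℝ) : EReal) * ⨆ x : X, elog (φ n x)) atTop

/-- `β̲(Φ) = limsup_n (1/n) inf_x log φ n x`. -/
def betaLow (φ : ℕ → X → ℝ) : EReal :=
  limsup (fun n : ℕ => (((n : ℝ)⁻¹ : ℝ) : EReal) * ⨅ x : X, elog (φ n x)) atTop

/-- `μ` is a `T`-invariant Borel probability measure. -/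
def InvProb (T : X → X) (μ : Measure X) : Prop :=
  IsProbabilityMeasure μ ∧ μ.map T = μ

/-- Entropy of the finite partition of `X` induced by `p`. -/
def partEnt (μ : Measure X) {S : Type} [Fintype S] (p : X → S) : ℝ :=
  ∑ s : S, Real.negMulLog (μ (p ⁻¹' {s})).toReal

/-- Measure-theoretic (Kolmogorov–Sinai) entropy `h_μ(T)`: supremum over finite
measurable partitions of `lim (1/n) H(⋁_{i<n} T^{-i} P)` (the limit is the inf). -/
def mEnt (T : X → X) (μ : Measure X) : EReal :=
  ⨆ (m : ℕ) (p : X → Fin m) (_ : Measurable p),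
    ⨅ (n : ℕ) (_ : 0 < n),
      (((n : ℝ)⁻¹ * partEnt μ (fun x (i : Fin n) => p (T^[(i : ℕ)] x)) : ℝ) : EReal)

/-- Bowen ball `B_n(x, ε)` in the metric `d_n`. -/
def dynBall (T : X → X) (x : X) (n : ℕ) (ε : ℝ) : Set X :=
  {y | ∀ k < n, dist (T^[k] x) (T^[k] y) < ε}

/-- `M(Z, s, N, ε)`: infimum of `∑ exp (-s n_i)` over countable covers of `Z` by
Bowen balls `B_{n_i}(x_i, ε)` with `n_i ≥ N`. -/
def bowenM (T : X → X) (Z : Set X) (s : ℝ) (N : ℕ) (ε : ℝ) : ℝ≥0∞ :=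
  ⨅ (c : ℕ → X × ℕ) (_ : ∀ i, N ≤ (c i).2)
    (_ : Z ⊆ ⋃ i, dynBall T (c i).1 (c i).2 ε),
    ∑' i, ENNReal.ofReal (Real.exp (-(s * ((c i).2 : ℝ))))

/-- Bowen's topological entropy of `Z` at scale `ε`: the critical value of `s` at
which `M(Z, s, ε) = lim_N M(Z, s, N, ε)` jumps from `∞` to `0`. -/
def entAt (T : X → X) (Z : Set X) (ε : ℝ) : EReal :=
  sInf {s : EReal | ∃ r : ℝ, s = (r : EReal) ∧ (⨆ N, bowenM T Z r N ε) = 0}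

/-- Bowen's topological entropy `h_top(T, Z)` of an arbitrary subset `Z ⊆ X`. -/
def entOf (T : X → X) (Z : Set X) : EReal :=
  ⨆ (ε : ℝ) (_ : 0 < ε), entAt T Z ε

/-- `(n, ε)`-separated subset of `X`. -/
def IsSep (T : X → X) (n : ℕ) (ε : ℝ) (E : Finset X) : Prop :=
  ∀ x ∈ E, ∀ y ∈ E, x ≠ y → ∃ k < n, ε < dist (T^[k] x) (T^[k] y)

/-- `P_n(T, Φ, ε) = sup { ∑_{x ∈ E} φ n x : E is (n,ε)-separated }`. -/
def sepSum (T : X → X) (φ : ℕ → X → ℝ) (n : ℕ) (ε : ℝ) : ℝ≥0∞ :=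
  ⨆ (E : Finset X) (_ : IsSep T n ε E), ∑ x ∈ E, ENNReal.ofReal (φ n x)

/-- Topological pressure `P(T, Φ) = lim_{ε→0} limsup_n (1/n) log P_n(T, Φ, ε)`. -/
def pressure (T : X → X) (φ : ℕ → X → ℝ) : EReal :=
  ⨆ (ε : ℝ) (_ : 0 < ε),
    limsup (fun n : ℕ => (((n : ℝ)⁻¹ : ℝ) : EReal) * elogENN (sepSum T φ n ε)) atTop

/-- The potential `q · Φ = {∑ i, q i * log (φ i) n}`, i.e. `∏ i, (φ i n) ^ (q i)`. -/
def weightedPot {k : ℕ} (φ : Fin k → ℕ → X → ℝ) (q : Fin k → ℝ) : ℕ → X → ℝ :=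
  fun n x => ∏ i, (φ i n x) ^ (q i)

/-- The potential `Φ₁ + ⋯ + Φ_k`, i.e. `∏ i, φ i n`. -/
def sumPot {k : ℕ} (φ : Fin k → ℕ → X → ℝ) : ℕ → X → ℝ :=
  fun n x => ∏ i, φ i n x

end

/-- Dot product on `Fin k → ℝ`. -/
def dotp {k : ℕ} (a b : Fin k → ℝ) : ℝ := ∑ i, a i * b i

/-- The open positive orthant `ℝ_+^k`. -/
def posOrth (k : ℕ) : Set (Fin k → ℝ) := {q | ∀ i, 0 < q i}

/-- `a` is a subgradient of `F` at `q` relative to `U`. -/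
def IsSubgrad {k : ℕ} (U : Set (Fin k → ℝ)) (F : (Fin k → ℝ) → ℝ) (q a : Fin k → ℝ) : Prop :=
  ∀ t ∈ U, dotp a (t - q) ≤ F t - F q

/-!
Invariance of `μ`: for continuous `f`, `∫ f ∘ T dμₙ - ∫ f dμₙ = (1/n) ∫ (f ∘ Tⁿ - f) dνₙ`, which
is `O(‖f‖ / n)`.

The inequality is Misiurewicz's argument from the proof of the variational principle. Approximate
`Φ` to within `δ` by a sub-additive `ψ` and replace `log ψₙ` by the continuous, still sub-additive
`gₙ = log max (ψₙ, e^{-nc})`. Cutting `[0, n)` into blocks of length `m` gives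
`m gₙ ≤ ∑_{j<n} gₘ ∘ T^j + O(m)`, hence `(1/n) ∫ gₙ dνₙ ≤ (1/m) ∫ gₘ dμₙ + O(1/n)`. Along the weak*
convergent subsequence the right-hand side tends to `(1/m) ∫ gₘ dμ`, and for a suitable `m` and
truncation level `c` this is within `δ` of `Φ_*(μ)`.
-/

lemma Real.log_max_le_log_max_add {a b u v t : ℝ} (ha : 0 ≤ a) (hab : a = 0 ↔ b = 0)
    (hlog : a ≠ 0 → |Real.log a - Real.log b| ≤ t) (ht : 0 ≤ t) (hu : 0 < u) (huv : u ≤ v) :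
    Real.log (max b u) ≤ Real.log (max a v) + t := by
  rcases le_or_gt b u with hbu | hub
  · rw [max_eq_right hbu]
    linarith [Real.log_le_log hu (huv.trans (le_max_right a v))]
  · have ha0 : a ≠ 0 := hab.not.2 (hu.trans hub).ne'
    rw [max_eq_left hub.le]
    linarith [(abs_le.1 (hlog ha0)).1,
      Real.log_le_log (lt_of_le_of_ne ha (Ne.symm ha0)) (le_max_left a v)]

lemma continuous_log_max_exp {X : Type*} [TopologicalSpace X] {f : X → ℝ} (hf : Continuous f)
    (s : ℝ) :
    Continuous fun x => Real.log (max (f x) (Real.exp s)) :=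
  (hf.max continuous_const).log fun _ => ((Real.exp_pos s).trans_le (le_max_right _ _)).ne'

lemma exists_forall_abs_le_of_continuous {X : Type*} [TopologicalSpace X] [CompactSpace X]
    {g : ℕ → X → ℝ} (hg : ∀ n, Continuous (g n)) (m : ℕ) :
    ∃ C, ∀ j ≤ m, ∀ x, |g j x| ≤ C := by
  refine ⟨∑ k ∈ Finset.range (m + 1), ‖(⟨g k, hg k⟩ : C(X, ℝ))‖, fun j hj x => ?_⟩
  calc |g j x| = ‖(⟨g j, hg j⟩ : C(X, ℝ)) x‖ := rfl
    _ ≤ ‖(⟨g j, hg j⟩ : C(X, ℝ))‖ := ContinuousMap.norm_coe_le_norm _ x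
    _ ≤ ∑ k ∈ Finset.range (m + 1), ‖(⟨g k, hg k⟩ : C(X, ℝ))‖ :=
      Finset.single_le_sum (f := fun k => ‖(⟨g k, hg k⟩ : C(X, ℝ))‖) (fun k _ => norm_nonneg _)
        (Finset.mem_range.2 (by omega))

lemma Continuous.birkhoffSum {α M : Type*} [TopologicalSpace α] [TopologicalSpace M]
    [AddCommMonoid M] [ContinuousAdd M] {f : α → α} {g : α → M} (hf : Continuous f)
    (hg : Continuous g) (n : ℕ) : Continuous (birkhoffSum f g n) :=
  continuous_finsetSum _ fun k _ => hg.comp (hf.iterate k)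

lemma MeasureTheory.integral_le_integral_add_of_forall_le {α : Type*} [MeasurableSpace α]
    {μ : Measure α} [IsProbabilityMeasure μ] {f g : α → ℝ} (hf : Integrable f μ)
    (hg : Integrable g μ) {t : ℝ} (h : ∀ x, f x ≤ g x + t) :
    ∫ x, f x ∂μ ≤ ∫ x, g x ∂μ + t := by
  calc ∫ x, f x ∂μ ≤ ∫ x, (g x + t) ∂μ := integral_mono hf (hg.add (integrable_const t)) h
    _ = ∫ x, g x ∂μ + t := by simp [integral_add hg (integrable_const t)]

lemma MeasureTheory.isProbabilityMeasure_of_tendsto_integral_one {Ω : Type*} [MeasurableSpace Ω]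
    {μs : ℕ → Measure Ω} {μ : Measure Ω} [IsFiniteMeasure μ]
    (hprob : ∀ᶠ i in atTop, IsProbabilityMeasure (μs i))
    (hconv : Tendsto (fun i => ∫ _, (1 : ℝ) ∂μs i) atTop (𝓝 (∫ _, (1 : ℝ) ∂μ))) :
    IsProbabilityMeasure μ := by
  have hone : Tendsto (fun i => ∫ _, (1 : ℝ) ∂μs i) atTop (𝓝 1) :=
    tendsto_const_nhds.congr' <| hprob.mono fun i hi => by simp
  have := tendsto_nhds_unique hconv hone
  simp only [integral_const, smul_eq_mul, mul_one] at this
  exact isProbabilityMeasure_iff_real.2 this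

lemma Finset.sum_range_sum_range_div_add_mul (m n : ℕ) (hm : 1 ≤ m) (hmn : m ≤ n) (b : ℕ → ℝ) :
    ∑ l ∈ Finset.range m, ∑ j ∈ Finset.range ((n - l) / m), b (l + j * m)
      = ∑ i ∈ Finset.range (n - m + 1), b i := by
  rw [Finset.sum_sigma']
  refine Finset.sum_nbij' (fun p => p.1 + p.2 * m) (fun i => ⟨i % m, i / m⟩) ?_ ?_ ?_ ?_
    (fun _ _ => rfl)
  · rintro ⟨l, j⟩ hp
    simp only [Finset.mem_sigma, Finset.mem_range] at hp ⊢
    have := (Nat.le_div_iff_mul_le hm).mp hp.2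
    rw [Nat.succ_mul] at this
    omega
  · intro i hi
    simp only [Finset.mem_range, Finset.mem_sigma] at hi ⊢
    refine ⟨Nat.mod_lt _ hm, ?_⟩
    have h1 : i / m + 1 ≤ (n - i % m) / m := by
      rw [Nat.le_div_iff_mul_le hm, add_mul, one_mul]
      have := Nat.mod_add_div i m
      rw [mul_comm] at this
      omega
    omega
  · rintro ⟨l, j⟩ hp
    simp only [Finset.mem_sigma, Finset.mem_range] at hp
    have h1 : (l + j * m) % m = l := by
      rw [Nat.add_mul_mod_self_right, Nat.mod_eq_of_lt hp.1]
    have h2 : (l + j * m) / m = j := by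
      rw [Nat.add_mul_div_right _ _ hm, Nat.div_eq_of_lt hp.1, zero_add]
    simp [h1, h2]
  · intro i _
    simp [Nat.mod_add_div']

def IsSubadditiveCocycle {α : Type*} (T : α → α) (g : ℕ → α → ℝ) : Prop :=
  ∀ a b x, g (a + b) x ≤ g a x + g b (T^[a] x)

namespace IsSubadditiveCocycle

variable {α : Type*} {T : α → α} {g : ℕ → α → ℝ}

lemma le_add_sum (hg : IsSubadditiveCocycle T g) (m k l : ℕ) (x : α) :
    g (l + k * m) x ≤ g l x + ∑ j ∈ Finset.range k, g m (T^[l + j * m] x) := by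
  induction k with
  | zero => simp
  | succ k ih =>
    calc g (l + (k + 1) * m) x = g ((l + k * m) + m) x := by ring_nf
      _ ≤ g (l + k * m) x + g m (T^[l + k * m] x) := hg _ _ _
      _ ≤ g l x + ∑ j ∈ Finset.range (k + 1), g m (T^[l + j * m] x) := by
        rw [Finset.sum_range_succ]; linarith

/-- Cutting `[0, n)` into blocks of length `m` starting at each phase `l < m` and averaging
over the phases; the leftover pieces, of length `< m`, cost at most `3 m C`. -/
lemma mul_le_birkhoffSum_add (hg : IsSubadditiveCocycle T g) {m n : ℕ} (hm : 1 ≤ m)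
    (hmn : m ≤ n) {C : ℝ} (hC : ∀ j ≤ m, ∀ x, |g j x| ≤ C) (x : α) :
    m * g n x ≤ birkhoffSum T (g m) n x + 3 * m * C := by
  have hphase : ∀ l < m,
      g n x ≤ ∑ j ∈ Finset.range ((n - l) / m), g m (T^[l + j * m] x) + 2 * C := by
    intro l hl
    have hsplit : n = (l + (n - l) / m * m) + (n - l) % m := by
      have := Nat.div_add_mod (n - l) m
      rw [mul_comm] at this
      omega
    have hrest := hg (l + (n - l) / m * m) ((n - l) % m) x
    rw [← hsplit] at hrest
    have hl' := abs_le.mp (hC l hl.le x)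
    have hr' := abs_le.mp (hC ((n - l) % m) (Nat.mod_lt _ hm).le (T^[l + (n - l) / m * m] x))
    linarith [hg.le_add_sum m ((n - l) / m) l x]
  have hsum : m * g n x ≤ ∑ i ∈ Finset.range (n - m + 1), g m (T^[i] x) + m * (2 * C) := by
    have := Finset.sum_le_sum fun l hl => hphase l (Finset.mem_range.mp hl)
    rw [Finset.sum_add_distrib, Finset.sum_range_sum_range_div_add_mul m n hm hmn
      (fun i => g m (T^[i] x))] at this
    simpa using this
  have htail : -(m * C) ≤ ∑ i ∈ Finset.Ico (n - m + 1) n, g m (T^[i] x) := by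
    have hle : ∀ i ∈ Finset.Ico (n - m + 1) n, -C ≤ g m (T^[i] x) :=
      fun i _ => (abs_le.mp (hC m le_rfl _)).1
    have := Finset.card_nsmul_le_sum _ _ _ hle
    have hcard : ((Finset.Ico (n - m + 1) n).card : ℝ) ≤ m := by
      rw [Nat.card_Ico]; exact_mod_cast (by omega)
    have hC0 : 0 ≤ C := (abs_nonneg _).trans (hC 0 (Nat.zero_le _) x)
    rw [nsmul_eq_mul] at this
    nlinarith
  have hsplit := Finset.sum_range_add_sum_Ico (fun i => g m (T^[i] x)) (show n - m + 1 ≤ n by omega)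
  rw [birkhoffSum, ← hsplit]
  linarith

end IsSubadditiveCocycle

/-- The measure `μₙ` of the statement; `orbitMeasure T ν 0 = ⊤ • 0 = 0`. -/
noncomputable def orbitMeasure {X : Type*} [MeasurableSpace X] (T : X → X) (ν : Measure X)
    (n : ℕ) : Measure X :=
  (n : ℝ≥0∞)⁻¹ • ∑ i ∈ Finset.range n, ν.map T^[i]

lemma isProbabilityMeasure_orbitMeasure {X : Type*} [MeasurableSpace X] {T : X → X}
    (hT : Measurable T) (ν : Measure X) [IsProbabilityMeasure ν] {n : ℕ} (hn : n ≠ 0) :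
    IsProbabilityMeasure (orbitMeasure T ν n) := by
  constructor
  simp [orbitMeasure, Measure.map_apply (hT.iterate _) MeasurableSet.univ,
    ENNReal.inv_mul_cancel (Nat.cast_ne_zero.2 hn) (ENNReal.natCast_ne_top n)]

section OrbitMeasure

variable {X : Type*} [TopologicalSpace X] [CompactSpace X] [MeasurableSpace X] [BorelSpace X]
  [TopologicalSpace.PseudoMetrizableSpace X] {T : X → X} {g : ℕ → X → ℝ}

lemma Continuous.integrable_of_compactSpace {f : X → ℝ} (hf : Continuous f) (μ : Measure X)
    [IsFiniteMeasure μ] : Integrable f μ :=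
  hf.integrable_of_hasCompactSupport (HasCompactSupport.of_compactSpace f)

lemma integral_orbitMeasure (hT : Continuous T) (ν : Measure X) [IsFiniteMeasure ν] (n : ℕ)
    {h : X → ℝ} (hh : Continuous h) :
    ∫ x, h x ∂(orbitMeasure T ν n) = ∫ x, birkhoffAverage ℝ T h n x ∂ν := by
  have hTi : ∀ i, AEMeasurable T^[i] ν := fun i => (hT.iterate i).measurable.aemeasurable
  have hint : ∀ i, Integrable (fun x => h (T^[i] x)) ν :=
    fun i => (hh.comp (hT.iterate i)).integrable_of_compactSpace ν
  simp only [orbitMeasure, birkhoffAverage, birkhoffSum, integral_smul_measure, integral_smul,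
    integral_finsetSum _ fun i _ => hint i]
  rw [integral_finsetSum_measure fun i _ => hh.integrable_of_compactSpace _]
  simp [integral_map (hTi _) hh.aestronglyMeasurable]

lemma abs_integral_comp_sub_integral_orbitMeasure_le (hT : Continuous T) (ν : Measure X)
    [IsProbabilityMeasure ν] (n : ℕ) (f : C(X, ℝ)) :
    |∫ x, f (T x) ∂(orbitMeasure T ν n) - ∫ x, f x ∂(orbitMeasure T ν n)| ≤ 2 * ‖f‖ / n := by
  have hshift : ∀ x,
      birkhoffAverage ℝ T (fun y => f (T y)) n x = birkhoffAverage ℝ T f n (T x) := by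
    intro x
    simp only [birkhoffAverage, birkhoffSum, ← Function.iterate_succ_apply' T,
      Function.iterate_succ_apply]
  have hav : ∀ {h : X → ℝ}, Continuous h → Integrable (birkhoffAverage ℝ T h n) ν := fun hh =>
    Continuous.integrable_of_compactSpace
      (show Continuous (birkhoffAverage ℝ T _ n) from (hT.birkhoffSum hh n).const_smul (n : ℝ)⁻¹) ν
  rw [integral_orbitMeasure hT ν n (h := fun x => f (T x)) (f.continuous.comp hT),
    integral_orbitMeasure hT ν n f.continuous,
    ← integral_sub (hav (h := fun x => f (T x)) (f.continuous.comp hT)) (hav f.continuous),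
    ← Real.norm_eq_abs]
  calc _ ≤ 2 * ‖f‖ / n * ν.real univ :=
        norm_integral_le_of_norm_le_const (Eventually.of_forall fun x => ?_)
    _ = 2 * ‖f‖ / n := by rw [probReal_univ, mul_one]
  rw [hshift, ← dist_eq_norm, dist_birkhoffAverage_apply_birkhoffAverage]
  gcongr
  exact (dist_le_norm_add_norm _ _).trans
    (by linarith [f.norm_coe_le_norm (T^[n] x), f.norm_coe_le_norm x])

theorem map_eq_self_of_tendsto_integral_orbitMeasure (hT : Continuous T) {ν : ℕ → Measure X}
    (hν : ∀ i, IsProbabilityMeasure (ν i)) {n : ℕ → ℕ} (hn : Tendsto n atTop atTop)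
    {μ : Measure X} [IsFiniteMeasure μ]
    (hconv : ∀ f : C(X, ℝ),
      Tendsto (fun i => ∫ x, f x ∂(orbitMeasure T (ν i) (n i))) atTop (𝓝 (∫ x, f x ∂μ))) :
    μ.map T = μ := by
  refine ext_of_forall_integral_eq_of_IsFiniteMeasure fun f => ?_
  rw [integral_map hT.measurable.aemeasurable f.continuous.aestronglyMeasurable]
  have hdiff : Tendsto (fun i => ∫ x, f (T x) ∂(orbitMeasure T (ν i) (n i))
      - ∫ x, f x ∂(orbitMeasure T (ν i) (n i))) atTop (𝓝 0) :=
    squeeze_zero_norm (fun i => abs_integral_comp_sub_integral_orbitMeasure_le hT (ν i) (n i)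
      f.toContinuousMap) (tendsto_const_nhds.div_atTop (tendsto_natCast_atTop_atTop.comp hn))
  have hlim := (hconv (f.toContinuousMap.comp ⟨T, hT⟩)).sub (hconv f.toContinuousMap)
  exact sub_eq_zero.1 (tendsto_nhds_unique hlim hdiff)

lemma IsSubadditiveCocycle.inv_mul_integral_le (hg : IsSubadditiveCocycle T g) (hT : Continuous T)
    (hgc : ∀ n, Continuous (g n)) (ν : Measure X) [IsProbabilityMeasure ν] {m n : ℕ} (hm : 1 ≤ m)
    (hmn : m ≤ n) {C : ℝ} (hC : ∀ j ≤ m, ∀ x, |g j x| ≤ C) :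
    (n : ℝ)⁻¹ * ∫ x, g n x ∂ν ≤ (m : ℝ)⁻¹ * ∫ x, g m x ∂(orbitMeasure T ν n) + 3 * C / n := by
  have hm0 : (0 : ℝ) < m := by exact_mod_cast hm
  have hn0 : (0 : ℝ) < n := by exact_mod_cast hm.trans hmn
  have hsum : ∫ x, birkhoffSum T (g m) n x ∂ν = n * ∫ x, g m x ∂(orbitMeasure T ν n) := by
    rw [integral_orbitMeasure hT ν n (hgc m)]
    simp only [birkhoffAverage, smul_eq_mul]
    rw [integral_const_mul, mul_inv_cancel_left₀ hn0.ne']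
  have hblock : m * ∫ x, g n x ∂ν ≤ ∫ x, birkhoffSum T (g m) n x ∂ν + 3 * m * C := by
    rw [← integral_const_mul]
    exact integral_le_integral_add_of_forall_le
      (((hgc n).integrable_of_compactSpace ν).const_mul _)
      ((hT.birkhoffSum (hgc m) n).integrable_of_compactSpace ν)
      (hg.mul_le_birkhoffSum_add hm hmn hC)
  rw [hsum] at hblock
  field_simp
  linarith

lemma IsSubadditiveCocycle.eventually_inv_mul_integral_lt (hg : IsSubadditiveCocycle T g)
    (hT : Continuous T) (hgc : ∀ n, Continuous (g n)) {ν : ℕ → Measure X}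
    (hν : ∀ i, IsProbabilityMeasure (ν i)) {n : ℕ → ℕ} (hn : Tendsto n atTop atTop) {μ : Measure X}
    (hconv : ∀ f : C(X, ℝ),
      Tendsto (fun i => ∫ x, f x ∂(orbitMeasure T (ν i) (n i))) atTop (𝓝 (∫ x, f x ∂μ)))
    {m : ℕ} (hm : 1 ≤ m) {b : ℝ} (hb : (m : ℝ)⁻¹ * ∫ x, g m x ∂μ < b) :
    ∀ᶠ i in atTop, (n i : ℝ)⁻¹ * ∫ x, g (n i) x ∂(ν i) < b := by
  obtain ⟨C, hC⟩ := exists_forall_abs_le_of_continuous hgc m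
  have hlim : Tendsto (fun i => (m : ℝ)⁻¹ * ∫ x, g m x ∂(orbitMeasure T (ν i) (n i)) + 3 * C / n i)
      atTop (𝓝 ((m : ℝ)⁻¹ * ∫ x, g m x ∂μ)) := by
    simpa using ((hconv ⟨g m, hgc m⟩).const_mul (m : ℝ)⁻¹).add
      (tendsto_const_nhds.div_atTop (tendsto_natCast_atTop_atTop.comp hn))
  filter_upwards [hlim.eventually (gt_mem_nhds hb), hn.eventually (eventually_ge_atTop m)]
    with i hi hmi
  exact (hg.inv_mul_integral_le hT hgc (ν i) hm hmi hC).trans_lt hi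

end OrbitMeasure

/-- `log max (ψ n, e^{-n c})`: a continuous, real-valued substitute for `log ψ n` which,
unlike the naive truncation `log max (ψ n, e^{-c})`, stays sub-additive. -/
noncomputable def truncLog {X : Type*} (ψ : ℕ → X → ℝ) (c : ℝ) (n : ℕ) (x : X) : ℝ :=
  Real.log (max (ψ n x) (Real.exp (-(n * c))))

lemma isSubadditiveCocycle_truncLog {X : Type*} {T : X → X} {ψ : ℕ → X → ℝ}
    (hψ0 : ∀ n x, 0 ≤ ψ n x) (hψ : ∀ n m x, ψ (n + m) x ≤ ψ n x * ψ m (T^[n] x)) (c : ℝ) :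
    IsSubadditiveCocycle T (truncLog ψ c) := by
  intro a b x
  set A := max (ψ a x) (Real.exp (-(a * c)))
  set B := max (ψ b (T^[a] x)) (Real.exp (-(b * c)))
  have hA : 0 < A := (Real.exp_pos _).trans_le (le_max_right _ _)
  have hB : 0 < B := (Real.exp_pos _).trans_le (le_max_right _ _)
  have hexp : Real.exp (-(((a + b : ℕ) : ℝ) * c)) = Real.exp (-(a * c)) * Real.exp (-(b * c)) := by
    rw [← Real.exp_add]; push_cast; ring_nf
  have hle : max (ψ (a + b) x) (Real.exp (-(((a + b : ℕ) : ℝ) * c))) ≤ A * B := by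
    refine max_le ((hψ a b x).trans ?_) (hexp ▸ ?_)
    · exact mul_le_mul (le_max_left _ _) (le_max_left _ _) (hψ0 _ _) hA.le
    · exact mul_le_mul (le_max_right _ _) (le_max_right _ _) (Real.exp_pos _).le hA.le
  rw [truncLog, truncLog, truncLog, ← Real.log_mul hA.ne' hB.ne']
  exact Real.log_le_log ((Real.exp_pos _).trans_le (le_max_right _ _)) hle

lemma continuous_truncLog {X : Type*} [TopologicalSpace X] {ψ : ℕ → X → ℝ}
    (hψ : ∀ n, Continuous (ψ n)) (c : ℝ) (n : ℕ) :
    Continuous (truncLog ψ c n) :=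
  continuous_log_max_exp (hψ n) _

lemma exists_integral_lt_of_inv_mul_elogInt_lt {X : Type*} [MeasurableSpace X]
    (μ : Measure X) (f : X → ℝ) {m : ℕ} (hm : m ≠ 0) {b : ℝ}
    (h : (((m : ℝ)⁻¹ : ℝ) : EReal) * elogInt μ f < b) :
    ∃ R : ℕ, ∫ x, Real.log (max (f x) (Real.exp (-(R : ℝ)))) ∂μ < m * b := by
  by_contra! H
  have hm0 : (0 : ℝ) < m := Nat.cast_pos.2 (Nat.pos_of_ne_zero hm)
  have hle : ((m * b : ℝ) : EReal) ≤ elogInt μ f := le_iInf fun R => EReal.coe_le_coe_iff.2 (H R)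
  refine h.not_ge ?_
  calc (b : EReal) = (((m : ℝ)⁻¹ : ℝ) : EReal) * ((m * b : ℝ) : EReal) := by
        rw [← EReal.coe_mul, inv_mul_cancel_left₀ hm0.ne']
    _ ≤ _ := mul_le_mul_of_nonneg_left hle (EReal.coe_nonneg.2 (inv_nonneg.2 hm0.le))

section AsympSubAdditive

variable {X : Type*} [MetricSpace X] [CompactSpace X] [MeasurableSpace X] [BorelSpace X]
  {T : X → X} {φ ψ : ℕ → X → ℝ}

lemma elogInt_le_integral_truncLog_add (hφ : IsPotential φ) (hψ : IsPotential ψ)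
    (ν : Measure X) [IsProbabilityMeasure ν] (c : ℕ) {n : ℕ} {t : ℝ} (ht : 0 ≤ t)
    (happ : ∀ x, (φ n x = 0 ↔ ψ n x = 0) ∧
      (φ n x ≠ 0 → |Real.log (φ n x) - Real.log (ψ n x)| ≤ t)) :
    elogInt ν (φ n) ≤ ((∫ x, truncLog ψ c n x ∂ν + t : ℝ) : EReal) := by
  refine (iInf_le _ (n * c)).trans (EReal.coe_le_coe_iff.2 ?_)
  refine integral_le_integral_add_of_forall_le
    ((continuous_log_max_exp (hφ n).1 _).integrable_of_compactSpace ν)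
    ((continuous_truncLog (fun k => (hψ k).1) c n).integrable_of_compactSpace ν) fun x => ?_
  have hψφ : ψ n x ≠ 0 → |Real.log (ψ n x) - Real.log (φ n x)| ≤ t := fun h => by
    rw [abs_sub_comm]; exact (happ x).2 ((happ x).1.not.2 h)
  simpa [truncLog] using
    Real.log_max_le_log_max_add ((hψ n).2 x) (happ x).1.symm hψφ ht (Real.exp_pos _) le_rfl

lemma integral_truncLog_le (hφ : IsPotential φ) (hψ : IsPotential ψ) (μ : Measure X)
    [IsProbabilityMeasure μ] {c : ℝ} (hc : 0 ≤ c) {m : ℕ} (hm : 1 ≤ m) {t : ℝ} (ht : 0 ≤ t)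
    (happ : ∀ x, (φ m x = 0 ↔ ψ m x = 0) ∧
      (φ m x ≠ 0 → |Real.log (φ m x) - Real.log (ψ m x)| ≤ t)) :
    ∫ x, truncLog ψ c m x ∂μ ≤ ∫ x, Real.log (max (φ m x) (Real.exp (-c))) ∂μ + t := by
  have hexp : Real.exp (-(m * c)) ≤ Real.exp (-c) :=
    Real.exp_le_exp.2 (neg_le_neg (le_mul_of_one_le_left hc (by exact_mod_cast hm)))
  exact integral_le_integral_add_of_forall_le
    ((continuous_truncLog (fun k => (hψ k).1) c m).integrable_of_compactSpace μ)
    ((continuous_log_max_exp (hφ m).1 _).integrable_of_compactSpace μ) fun x =>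
    Real.log_max_le_log_max_add ((hφ m).2 x) (happ x).1 (happ x).2 ht (Real.exp_pos _) hexp

theorem IsAsympSubAdditive.limsup_le_potStar (hT : Continuous T) (hφ : IsAsympSubAdditive T φ)
    {ν : ℕ → Measure X} (hν : ∀ i, IsProbabilityMeasure (ν i)) {n : ℕ → ℕ}
    (hn : Tendsto n atTop atTop) {μ : Measure X} [IsProbabilityMeasure μ]
    (hconv : ∀ f : C(X, ℝ),
      Tendsto (fun i => ∫ x, f x ∂(orbitMeasure T (ν i) (n i))) atTop (𝓝 (∫ x, f x ∂μ))) :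
    limsup (fun i => (((n i : ℝ)⁻¹ : ℝ) : EReal) * elogInt (ν i) (φ (n i))) atTop
      ≤ potStar μ φ := by
  refine EReal.le_of_forall_lt_iff_le.1 fun r hr => ?_
  obtain ⟨r', hr', hr'r⟩ := EReal.exists_between_coe_real hr
  set δ := (r - r') / 2 with hδ
  have hδ0 : 0 < δ := half_pos (sub_pos.2 (EReal.coe_lt_coe_iff.1 hr'r))
  obtain ⟨ψ, hψ, happ⟩ := hφ.2 (δ / 2) (half_pos hδ0)
  have happ := happ δ (half_lt_self hδ0)
  obtain ⟨m, happm, hm, hm1⟩ :=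
    (happ.and ((eventually_lt_of_limsup_lt hr').and (eventually_ge_atTop 1))).exists
  obtain ⟨c, hc⟩ := exists_integral_lt_of_inv_mul_elogInt_lt μ (φ m) (by omega) hm
  have hm0 : (0 : ℝ) < m := by exact_mod_cast hm1
  have hgm : (m : ℝ)⁻¹ * ∫ x, truncLog ψ c m x ∂μ < r' + δ := by
    have := integral_truncLog_le hφ.1 hψ.1 μ c.cast_nonneg hm1 (by positivity) happm
    rw [inv_mul_lt_iff₀ hm0]
    linarith
  have hev := (isSubadditiveCocycle_truncLog (fun k x => (hψ.1 k).2 x) hψ.2 c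
    ).eventually_inv_mul_integral_lt hT (continuous_truncLog (fun k => (hψ.1 k).1) c) hν hn hconv
    hm1 hgm
  refine limsup_le_of_le (by isBoundedDefault) ?_
  filter_upwards [hev, hn.eventually happ, hn.eventually (eventually_ne_atTop 0)]
    with i hi happi hni
  calc (((n i : ℝ)⁻¹ : ℝ) : EReal) * elogInt (ν i) (φ (n i))
      ≤ (((n i : ℝ)⁻¹ : ℝ) : EReal) * ((∫ x, truncLog ψ c (n i) x ∂(ν i) + n i * δ : ℝ) : EReal) :=
        mul_le_mul_of_nonneg_left (elogInt_le_integral_truncLog_add hφ.1 hψ.1 (ν i) c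
          (by positivity) happi) (EReal.coe_nonneg.2 (by positivity))
    _ ≤ r := by
      rw [← EReal.coe_mul, EReal.coe_le_coe_iff, mul_add,
        inv_mul_cancel_left₀ (Nat.cast_ne_zero.2 hni)]
      linarith

end AsympSubAdditive

theorem stmt8_general {X : Type*} [MetricSpace X] [CompactSpace X] [MeasurableSpace X] [BorelSpace X]
    (T : X → X) (hT : Continuous T) (φ : ℕ → X → ℝ)
    (hφ : IsAsympSubAdditive T φ)
    (ν : ℕ → MeasureTheory.Measure X) (hν : ∀ n, MeasureTheory.IsProbabilityMeasure (ν n))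
    (μseq : ℕ → MeasureTheory.Measure X)
    (hμseq : ∀ n, μseq n = ((n : ℝ≥0∞))⁻¹ •
      ∑ i ∈ Finset.range n, (ν n).map (T^[i]))
    (s : ℕ → ℕ) (hs : StrictMono s)
    (μ : MeasureTheory.Measure X) (hfin : MeasureTheory.IsFiniteMeasure μ)
    (hconv : ∀ f : C(X, ℝ),
      Tendsto (fun i => ∫ x, f x ∂(μseq (s i))) atTop (𝓝 (∫ x, f x ∂μ))) :
    μ.map T = μ ∧
    limsup (fun i : ℕ => (((s i : ℝ)⁻¹ : ℝ) : EReal) * elogInt (ν (s i)) (φ (s i))) atTop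
      ≤ potStar μ φ := by
  obtain rfl : μseq = fun n => orbitMeasure T (ν n) n := funext hμseq
  have hs := hs.tendsto_atTop
  have : IsProbabilityMeasure μ :=
    isProbabilityMeasure_of_tendsto_integral_one
      ((hs.eventually (eventually_ne_atTop 0)).mono fun i hi =>
        isProbabilityMeasure_orbitMeasure hT.measurable (ν (s i)) hi)
      (by simpa using hconv 1)
  exact ⟨map_eq_self_of_tendsto_integral_orbitMeasure hT (fun i => hν (s i)) hs hconv,
    hφ.limsup_le_potStar hT (fun i => hν (s i)) hs hconv⟩

/-- if `μ_n = (1/n) ∑_{i<n} ν_n ∘ T^{-i}` and `μ_{n_i} → μ` weakly*,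
then `μ` is invariant and `limsup (1/n_i) ∫ log φ_{n_i} dν_{n_i} ≤ Φ_*(μ)`. -/
theorem stmt8 {X : Type*} [MetricSpace X] [CompactSpace X] [MeasurableSpace X] [BorelSpace X] [Nonempty X]
    (T : X → X) (hT : Continuous T) (φ : ℕ → X → ℝ)
    (hφ : IsAsympSubAdditive T φ)
    (ν : ℕ → MeasureTheory.Measure X) (hν : ∀ n, MeasureTheory.IsProbabilityMeasure (ν n))
    (μseq : ℕ → MeasureTheory.Measure X)
    (hμseq : ∀ n, μseq n = ((n : ℝ≥0∞))⁻¹ •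
      ∑ i ∈ Finset.range n, (ν n).map (T^[i]))
    (s : ℕ → ℕ) (hs : StrictMono s)
    (μ : MeasureTheory.Measure X) (hfin : MeasureTheory.IsFiniteMeasure μ)
    (hconv : ∀ f : C(X, ℝ),
      Tendsto (fun i => ∫ x, f x ∂(μseq (s i))) atTop (𝓝 (∫ x, f x ∂μ))) :
    μ.map T = μ ∧
    limsup (fun i : ℕ => (((s i : ℝ)⁻¹ : ℝ) : EReal) * elogInt (ν (s i)) (φ (s i))) atTop
      ≤ potStar μ φ :=
  stmt8_general T hT φ hφ ν hν μseq hμseq s hs μ hfin hconv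
end

section
/- Let (X,T) be a TDS with h_top(T) < ∞ and Φ_1,…,Φ_k asymptotically sub-additive potentials with β̄(Φ_1+…+Φ_k) > -∞. Then the pressure function P_Φ(q) = P(T, q·Φ) is a real continuous convex function on the open positive orthant ℝ_+^k, and every subgradient a = (a_1,…,a_k) of P_Φ at any point of ℝ_+^k satisfies a_i ≤ β̄(Φ_i) for all i. -/
open MeasureTheory Filter Topology Set
open scoped ENNReal NNReal

/-!
Let `P(T, Ψ, ε)` be the exponential growth rate of the separated sums `P_n(T, Ψ, ε)`; the pressure
is its supremum over `ε`, and `β̄(Ψ)` is the growth rate of `sup_x ψ_n`. Each claim reduces to a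
pointwise inequality between separated sums. Hölder's inequality gives
`P_n(θq + (1-θ)q') ≤ P_n(q)^θ P_n(q')^(1-θ)`, hence convexity, and a finite convex function on an
open set is continuous. The potential `(q + eᵢ)·Φ` is `q·Φ` times `φᵢ`, so its separated sums are at
most those of `q·Φ` times `sup φᵢ`; thus `P_Φ(q + eᵢ) ≤ P_Φ(q) + β̄(Φᵢ)`, which bounds the `i`-th
coordinate of every subgradient.

Finiteness comes from `β̄(q·Φ) ≤ P_Φ(q) ≤ P(T, 0) + β̄(q·Φ)`, where `P(T, 0)` is `pressure T 1` in
this multiplicative encoding. Bowen's `M(X, s, ε) = 0` yields a finite cover by Bowen balls of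
lengths `nᵢ ≥ 1` with `∑ e^{-s nᵢ} < 1`, and a renewal argument over it bounds `(n, 2ε)`-separated
sets by `C e^{sn}`; hence `P(T, 0) ≤ max (h_top(T)) 0 < ∞`. The sub-additive approximants give
`φᵢ ≤ e^{cn}`, so `β̄(q·Φ) < ∞`; and wherever `∏ φᵢ(x) ≥ e^{βn}` these bounds force
`∏ φᵢ(x)^{qᵢ} ≥ e^{(∑ q)(β - k c) n}`, so `β̄(Φ₁ + ⋯ + Φ_k) > -∞` gives `β̄(q·Φ) > -∞`.
-/

open ExpGrowth

lemma elogENN_eq_log : elogENN = ENNReal.log := rfl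

lemma elog_eq_log_ofReal {r : ℝ} (hr : 0 ≤ r) : elog r = ENNReal.log (ENNReal.ofReal r) := by
  rcases hr.eq_or_lt with rfl | hr
  · simp [elog]
  · rw [elog, if_neg hr.ne', ENNReal.log_ofReal_of_pos hr]

lemma coe_inv_natCast_mul (n : ℕ) (x : EReal) : (((n : ℝ)⁻¹ : ℝ) : EReal) * x = x / n := by
  rw [EReal.div_eq_inv_mul, EReal.coe_inv, EReal.coe_natCast]

lemma EReal.exp_coe_mul_natCast (c : ℝ) (n : ℕ) :
    EReal.exp (c * n) = ENNReal.ofReal (Real.exp (c * n)) := by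
  rw [← EReal.coe_natCast, ← EReal.coe_mul, EReal.exp_coe]

lemma EReal.coe_mul_ne_top {c : ℝ} (hc : 0 ≤ c) {x : EReal} (hx : x ≠ ⊤) :
    (c : EReal) * x ≠ ⊤ :=
  (EReal.mul_ne_top _ _).2
    ⟨.inl (EReal.coe_ne_bot c), .inl (by exact_mod_cast hc), .inl (EReal.coe_ne_top c), .inr hx⟩

lemma expGrowthSup_rpow {u : ℕ → ℝ≥0∞} {a : ℝ} (ha : 0 ≤ a) :
    expGrowthSup (fun n => u n ^ a) = a * expGrowthSup u := by
  simp only [expGrowthSup, ENNReal.log_rpow, ← EReal.mul_div]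
  exact EReal.limsup_const_mul_of_nonneg_of_ne_top (by exact_mod_cast ha) (EReal.coe_ne_top a)

lemma le_mul_pow_of_le_sum_sub {u : ℕ → ℝ≥0∞} (hu : Monotone u) {ι : Type*} {t : Finset ι}
    {m : ι → ℕ} {N : ℕ} (hm : ∀ i ∈ t, 1 ≤ m i ∧ m i ≤ N) {b : ℝ≥0∞} (hb : 1 ≤ b) (hb' : b ≠ ⊤)
    (hsum : ∑ i ∈ t, (b ^ m i)⁻¹ ≤ 1) (hrec : ∀ n, N < n → u n ≤ ∑ i ∈ t, u (n - m i)) (n : ℕ) :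
    u n ≤ u N * b ^ n := by
  induction n using Nat.strong_induction_on with
  | _ n ih =>
  rcases le_or_gt n N with hn | hn
  · exact (hu hn).trans (le_mul_of_one_le_right' (one_le_pow₀ hb))
  have hpow : ∀ i ∈ t, b ^ (n - m i) = b ^ n * (b ^ m i)⁻¹ := fun i hi => by
    rw [← pow_sub_mul_pow b ((hm i hi).2.trans hn.le), ENNReal.mul_inv_cancel_right]
    · exact pow_ne_zero _ (zero_lt_one.trans_le hb).ne'
    · exact ENNReal.pow_ne_top hb'
  calc u n ≤ ∑ i ∈ t, u (n - m i) := hrec n hn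
    _ ≤ ∑ i ∈ t, u N * b ^ (n - m i) :=
        Finset.sum_le_sum fun i hi => ih _ (by have := (hm i hi).1; omega)
    _ = u N * b ^ n * ∑ i ∈ t, (b ^ m i)⁻¹ := by
        rw [Finset.mul_sum]
        exact Finset.sum_congr rfl fun i hi => by rw [hpow i hi, mul_assoc]
    _ ≤ u N * b ^ n := mul_le_of_le_one_right' hsum

lemma div_rpow_le_rpow {a A q M : ℝ} (ha : 0 ≤ a) (haA : a ≤ A) (hA : 1 ≤ A) (hq : 0 ≤ q)
    (hqM : q ≤ M) : (a / A) ^ M ≤ a ^ q := by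
  have hA0 : 0 ≤ A := zero_le_one.trans hA
  calc (a / A) ^ M ≤ (a / A) ^ q :=
        Real.rpow_le_rpow_of_exponent_ge' (div_nonneg ha hA0) (div_le_one_of_le₀ haA hA0) hq hqM
    _ = a ^ q / A ^ q := Real.div_rpow ha hA0 q
    _ ≤ a ^ q := div_le_self (Real.rpow_nonneg ha q) (Real.one_le_rpow hA hq)

section Potentials

variable {X : Type*}

lemma betaBar_eq_expGrowthSup {ψ : ℕ → X → ℝ} (hψ : ∀ n x, 0 ≤ ψ n x) :
    betaBar ψ = expGrowthSup (fun n => ⨆ x, ENNReal.ofReal (ψ n x)) := by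
  simp only [betaBar, expGrowthSup, coe_inv_natCast_mul, elog_eq_log_ofReal (hψ _ _),
    ← ENNReal.logOrderIso_apply, ENNReal.logOrderIso.map_iSup]

lemma betaBar_le_of_eventually_le_exp {ψ : ℕ → X → ℝ} (hψ : ∀ n x, 0 ≤ ψ n x) {c : ℝ}
    (h : ∀ᶠ n : ℕ in atTop, ∀ x, ψ n x ≤ Real.exp (c * n)) : betaBar ψ ≤ c := by
  rw [betaBar_eq_expGrowthSup hψ]
  refine Eventually.expGrowthSup_le (h.mono fun n hn => ?_)
  rw [EReal.exp_coe_mul_natCast]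
  exact iSup_le fun x => ENNReal.ofReal_le_ofReal (hn x)

lemma le_betaBar_of_frequently_exp_le {ψ : ℕ → X → ℝ} (hψ : ∀ n x, 0 ≤ ψ n x) {c : ℝ}
    (h : ∃ᶠ n : ℕ in atTop, ∃ x, Real.exp (c * n) ≤ ψ n x) : (c : EReal) ≤ betaBar ψ := by
  rw [betaBar_eq_expGrowthSup hψ]
  refine Frequently.le_expGrowthSup (h.mono fun n ⟨x, hx⟩ => ?_)
  rw [EReal.exp_coe_mul_natCast]
  exact le_iSup_of_le x (ENNReal.ofReal_le_ofReal hx)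

lemma frequently_exp_le_of_lt_betaBar {ψ : ℕ → X → ℝ} (hψ : ∀ n x, 0 ≤ ψ n x) {c : ℝ}
    (h : (c : EReal) < betaBar ψ) : ∃ᶠ n : ℕ in atTop, ∃ x, Real.exp (c * n) ≤ ψ n x := by
  obtain ⟨c', hcc', hc'⟩ := EReal.exists_between_coe_real h
  rw [betaBar_eq_expGrowthSup hψ] at hc'
  refine ((frequently_exp_le hc').and_eventually (eventually_gt_atTop 0)).mono ?_
  rintro n ⟨hn, hn0⟩
  rw [EReal.exp_coe_mul_natCast] at hn
  have hlt : ENNReal.ofReal (Real.exp (c * n)) < ⨆ x, ENNReal.ofReal (ψ n x) := by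
    refine lt_of_lt_of_le ?_ hn
    rw [ENNReal.ofReal_lt_ofReal_iff (Real.exp_pos _), Real.exp_lt_exp]
    exact mul_lt_mul_of_pos_right (by exact_mod_cast hcc') (by exact_mod_cast hn0)
  obtain ⟨x, hx⟩ := lt_iSup_iff.1 hlt
  exact ⟨x, ((ENNReal.ofReal_lt_ofReal_iff_of_nonneg (Real.exp_pos _).le).1 hx).le⟩

section WeightedPot

variable {k : ℕ} {φ : Fin k → ℕ → X → ℝ}

lemma weightedPot_nonneg (hφ : ∀ i n x, 0 ≤ φ i n x) (q : Fin k → ℝ) (n : ℕ) (x : X) :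
    0 ≤ weightedPot φ q n x :=
  Finset.prod_nonneg fun i _ => Real.rpow_nonneg (hφ i n x) _

lemma weightedPot_smul_add (hφ : ∀ i n x, 0 ≤ φ i n x) {q q' : Fin k → ℝ} (hq : ∀ i, 0 ≤ q i)
    (hq' : ∀ i, 0 ≤ q' i) {a b : ℝ} (ha : 0 ≤ a) (hb : 0 ≤ b) :
    weightedPot φ (a • q + b • q') =
      fun n x => weightedPot φ q n x ^ a * weightedPot φ q' n x ^ b := by
  ext n x
  simp only [weightedPot, ← Real.finsetProd_rpow _ _ (fun i _ => Real.rpow_nonneg (hφ i n x) _),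
    ← Finset.prod_mul_distrib, Pi.add_apply, Pi.smul_apply, smul_eq_mul]
  refine Finset.prod_congr rfl fun i _ => ?_
  rw [← Real.rpow_mul (hφ i n x), ← Real.rpow_mul (hφ i n x),
    ← Real.rpow_add_of_nonneg (hφ i n x) (mul_nonneg (hq i) ha) (mul_nonneg (hq' i) hb),
    mul_comm a, mul_comm b]

lemma weightedPot_add_single (hφ : ∀ i n x, 0 ≤ φ i n x) {q : Fin k → ℝ} (hq : ∀ i, 0 ≤ q i)
    (i : Fin k) : weightedPot φ (q + Pi.single i 1) = weightedPot φ q * φ i := by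
  ext n x
  simp only [weightedPot, Pi.mul_apply, Pi.add_apply]
  rw [Finset.prod_congr rfl fun j _ => Real.rpow_add_of_nonneg (hφ j n x) (hq j)
    (by by_cases h : j = i <;> simp [h]), Finset.prod_mul_distrib]
  congr 1
  rw [Finset.prod_eq_single i (fun j _ hji => by simp [hji]) (by simp)]
  simp

lemma weightedPot_le_exp (hφ : ∀ i n x, 0 ≤ φ i n x) {q : Fin k → ℝ} (hq : ∀ i, 0 ≤ q i)
    {c : ℝ} {n : ℕ} {x : X} (h : ∀ i, φ i n x ≤ Real.exp (c * n)) :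
    weightedPot φ q n x ≤ Real.exp ((c * ∑ i, q i) * n) := by
  calc weightedPot φ q n x ≤ ∏ i, Real.exp (c * n) ^ q i :=
        Finset.prod_le_prod (fun i _ => Real.rpow_nonneg (hφ i n x) _)
          fun i _ => Real.rpow_le_rpow (hφ i n x) (h i) (hq i)
    _ = Real.exp ((c * ∑ i, q i) * n) := by
        simp only [← Real.exp_mul, ← Real.exp_sum, Finset.mul_sum, Finset.sum_mul]
        congr 1
        exact Finset.sum_congr rfl fun i _ => by ring

/-- Normalising each factor by the common bound `A = exp (c n) ≥ 1` makes it at most `1`, so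
raising it to the largest weight `∑ q` only decreases it. -/
lemma exp_le_weightedPot (hφ : ∀ i n x, 0 ≤ φ i n x) {q : Fin k → ℝ} (hq : ∀ i, 0 ≤ q i)
    {c β : ℝ} (hc : 0 ≤ c) {n : ℕ} {x : X} (h : ∀ i, φ i n x ≤ Real.exp (c * n))
    (hβ : Real.exp (β * n) ≤ sumPot φ n x) :
    Real.exp (((∑ i, q i) * (β - k * c)) * n) ≤ weightedPot φ q n x := by
  have hA : 1 ≤ Real.exp (c * n) := Real.one_le_exp (by positivity)
  calc Real.exp (((∑ i, q i) * (β - k * c)) * n)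
      = (Real.exp (β * n) / Real.exp (c * n) ^ k) ^ ∑ i, q i := by
        rw [← Real.exp_nat_mul, ← Real.exp_sub, ← Real.exp_mul]
        ring_nf
    _ ≤ (sumPot φ n x / Real.exp (c * n) ^ k) ^ ∑ i, q i := by
        gcongr
        exact Finset.sum_nonneg fun i _ => hq i
    _ = ∏ i, (φ i n x / Real.exp (c * n)) ^ ∑ j, q j := by
        rw [Real.finsetProd_rpow _ _ fun i _ => div_nonneg (hφ i n x) (Real.exp_pos _).le,
          Finset.prod_div_distrib, Finset.prod_const, Finset.card_univ, Fintype.card_fin, sumPot]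
    _ ≤ weightedPot φ q n x :=
        Finset.prod_le_prod
          (fun i _ => Real.rpow_nonneg (div_nonneg (hφ i n x) (Real.exp_pos _).le) _)
          fun i _ => div_rpow_le_rpow (hφ i n x) (h i) hA (hq i)
            (Finset.single_le_sum (fun j _ => hq j) (Finset.mem_univ i))

lemma betaBar_weightedPot_le (hφ : ∀ i n x, 0 ≤ φ i n x) {q : Fin k → ℝ} (hq : ∀ i, 0 ≤ q i)
    {c : ℝ} (hc : ∀ᶠ n : ℕ in atTop, ∀ i x, φ i n x ≤ Real.exp (c * n)) :
    betaBar (weightedPot φ q) ≤ ((c * ∑ i, q i : ℝ) : EReal) :=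
  betaBar_le_of_eventually_le_exp (weightedPot_nonneg hφ q)
    (hc.mono fun _ hn x => weightedPot_le_exp hφ hq fun i => hn i x)

lemma betaBar_weightedPot_ne_bot (hφ : ∀ i n x, 0 ≤ φ i n x) {q : Fin k → ℝ} (hq : ∀ i, 0 ≤ q i)
    {c : ℝ} (hc0 : 0 ≤ c) (hc : ∀ᶠ n : ℕ in atTop, ∀ i x, φ i n x ≤ Real.exp (c * n))
    (hβ : betaBar (sumPot φ) ≠ ⊥) : betaBar (weightedPot φ q) ≠ ⊥ := by
  obtain ⟨β, -, hβ⟩ := EReal.exists_between_coe_real (bot_lt_iff_ne_bot.2 hβ)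
  have hsum : ∀ n x, 0 ≤ sumPot φ n x := fun n x => Finset.prod_nonneg fun i _ => hφ i n x
  refine ne_bot_of_le_ne_bot (EReal.coe_ne_bot ((∑ i, q i) * (β - k * c)))
    (le_betaBar_of_frequently_exp_le (weightedPot_nonneg hφ q) ?_)
  exact ((frequently_exp_le_of_lt_betaBar hsum hβ).and_eventually hc).mono
    fun n ⟨⟨x, hx⟩, hn⟩ => ⟨x, exp_le_weightedPot hφ hq hc0 (fun i => hn i x) hx⟩

end WeightedPot

variable [MetricSpace X] {T : X → X}

lemma pressure_eq_iSup_expGrowthSup (ψ : ℕ → X → ℝ) :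
    pressure T ψ = ⨆ (ε : ℝ) (_ : 0 < ε), expGrowthSup (fun n => sepSum T ψ n ε) := by
  simp only [pressure, expGrowthSup, coe_inv_natCast_mul, elogENN_eq_log]

lemma expGrowthSup_sepSum_le_pressure (ψ : ℕ → X → ℝ) {ε : ℝ} (hε : 0 < ε) :
    expGrowthSup (fun n => sepSum T ψ n ε) ≤ pressure T ψ := by
  rw [pressure_eq_iSup_expGrowthSup]
  exact le_iSup₂_of_le ε hε le_rfl

lemma isSep_singleton (n : ℕ) (ε : ℝ) (x : X) : IsSep T n ε {x} := by
  intro a ha b hb hab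
  simp only [Finset.mem_singleton] at ha hb
  exact absurd (ha.trans hb.symm) hab

lemma sum_le_sepSum {ψ : ℕ → X → ℝ} {n : ℕ} {ε : ℝ} {E : Finset X} (hE : IsSep T n ε E) :
    ∑ x ∈ E, ENNReal.ofReal (ψ n x) ≤ sepSum T ψ n ε :=
  le_iSup₂_of_le (f := fun (E : Finset X) (_ : IsSep T n ε E) =>
    ∑ x ∈ E, ENNReal.ofReal (ψ n x)) E hE le_rfl

lemma iSup_ofReal_le_sepSum (ψ : ℕ → X → ℝ) (n : ℕ) (ε : ℝ) :
    ⨆ x, ENNReal.ofReal (ψ n x) ≤ sepSum T ψ n ε :=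
  iSup_le fun x => by simpa using sum_le_sepSum (ψ := ψ) (isSep_singleton (T := T) n ε x)

lemma betaBar_le_pressure {ψ : ℕ → X → ℝ} (hψ : ∀ n x, 0 ≤ ψ n x) :
    betaBar ψ ≤ pressure T ψ := by
  rw [betaBar_eq_expGrowthSup hψ]
  exact (expGrowthSup_monotone fun n => iSup_ofReal_le_sepSum ψ n 1).trans
    (expGrowthSup_sepSum_le_pressure ψ one_pos)

lemma sepSum_mul_le {ψ f : ℕ → X → ℝ} (hψ : ∀ n x, 0 ≤ ψ n x) (n : ℕ) (ε : ℝ) :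
    sepSum T (ψ * f) n ε ≤ sepSum T ψ n ε * ⨆ x, ENNReal.ofReal (f n x) := by
  refine iSup₂_le fun E hE => ?_
  calc ∑ x ∈ E, ENNReal.ofReal ((ψ * f) n x)
      ≤ ∑ x ∈ E, ENNReal.ofReal (ψ n x) * ⨆ y, ENNReal.ofReal (f n y) := by
        gcongr with x
        rw [Pi.mul_apply, Pi.mul_apply, ENNReal.ofReal_mul (hψ n x)]
        gcongr
        exact le_iSup (fun y => ENNReal.ofReal (f n y)) x
    _ ≤ sepSum T ψ n ε * ⨆ y, ENNReal.ofReal (f n y) := by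
        rw [← Finset.sum_mul]
        gcongr
        exact sum_le_sepSum hE

lemma pressure_mul_le {ψ f : ℕ → X → ℝ} (hψ : ∀ n x, 0 ≤ ψ n x) (hf : ∀ n x, 0 ≤ f n x)
    (hPψ : pressure T ψ ≠ ⊤) (hβf : betaBar f ≠ ⊤) :
    pressure T (ψ * f) ≤ pressure T ψ + betaBar f := by
  rw [pressure_eq_iSup_expGrowthSup (ψ * f)]
  refine iSup₂_le fun ε hε => ?_
  have hle := expGrowthSup_sepSum_le_pressure (T := T) ψ hε
  rw [betaBar_eq_expGrowthSup hf] at hβf ⊢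
  calc expGrowthSup (fun n => sepSum T (ψ * f) n ε)
      ≤ expGrowthSup ((fun n => sepSum T ψ n ε) * fun n => ⨆ x, ENNReal.ofReal (f n x)) :=
        expGrowthSup_monotone fun n => sepSum_mul_le hψ n ε
    _ ≤ _ := expGrowthSup_mul_le (.inr hβf) (.inl (ne_top_of_le_ne_top hPψ hle))
    _ ≤ _ := by gcongr

lemma sepSum_rpow_mul_rpow_le {f g : ℕ → X → ℝ} (hf : ∀ n x, 0 ≤ f n x) (hg : ∀ n x, 0 ≤ g n x)
    {a b : ℝ} (ha : 0 < a) (hb : 0 < b) (hab : a + b = 1) (n : ℕ) (ε : ℝ) :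
    sepSum T (fun n x => f n x ^ a * g n x ^ b) n ε ≤
      sepSum T f n ε ^ a * sepSum T g n ε ^ b := by
  have hconj : (1 / a).HolderConjugate (1 / b) := by
    rw [Real.holderConjugate_iff]
    refine ⟨?_, ?_⟩
    · rw [one_div, one_lt_inv₀ ha]; linarith
    · simpa [one_div, inv_inv] using hab
  refine iSup₂_le fun E hE => ?_
  calc ∑ x ∈ E, ENNReal.ofReal (f n x ^ a * g n x ^ b)
      = ∑ x ∈ E, ENNReal.ofReal (f n x) ^ a * ENNReal.ofReal (g n x) ^ b := by
        refine Finset.sum_congr rfl fun x _ => ?_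
        rw [ENNReal.ofReal_mul (Real.rpow_nonneg (hf n x) a),
          ENNReal.ofReal_rpow_of_nonneg (hf n x) ha.le,
          ENNReal.ofReal_rpow_of_nonneg (hg n x) hb.le]
    _ ≤ (∑ x ∈ E, ENNReal.ofReal (f n x)) ^ a * (∑ x ∈ E, ENNReal.ofReal (g n x)) ^ b := by
        simpa [← ENNReal.rpow_mul, ha.ne', hb.ne'] using
          ENNReal.inner_le_Lp_mul_Lq E (fun x => ENNReal.ofReal (f n x) ^ a)
            (fun x => ENNReal.ofReal (g n x) ^ b) hconj
    _ ≤ sepSum T f n ε ^ a * sepSum T g n ε ^ b := by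
        gcongr <;> exact sum_le_sepSum hE

lemma pressure_rpow_mul_rpow_le {f g : ℕ → X → ℝ} (hf : ∀ n x, 0 ≤ f n x)
    (hg : ∀ n x, 0 ≤ g n x) {a b : ℝ} (ha : 0 < a) (hb : 0 < b) (hab : a + b = 1)
    (hPf : pressure T f ≠ ⊤) (hPg : pressure T g ≠ ⊤) :
    pressure T (fun n x => f n x ^ a * g n x ^ b) ≤ a * pressure T f + b * pressure T g := by
  rw [pressure_eq_iSup_expGrowthSup (fun n x => f n x ^ a * g n x ^ b)]
  refine iSup₂_le fun ε hε => ?_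
  have hlef := expGrowthSup_sepSum_le_pressure (T := T) f hε
  have hleg := expGrowthSup_sepSum_le_pressure (T := T) g hε
  calc expGrowthSup (fun n => sepSum T (fun n x => f n x ^ a * g n x ^ b) n ε)
      ≤ expGrowthSup ((fun n => sepSum T f n ε ^ a) * fun n => sepSum T g n ε ^ b) :=
        expGrowthSup_monotone fun n => sepSum_rpow_mul_rpow_le hf hg ha hb hab n ε
    _ ≤ expGrowthSup (fun n => sepSum T f n ε ^ a) +
          expGrowthSup (fun n => sepSum T g n ε ^ b) := by
        refine expGrowthSup_mul_le (.inr ?_) (.inl ?_) <;> rw [expGrowthSup_rpow (by positivity)]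
        · exact EReal.coe_mul_ne_top hb.le (ne_top_of_le_ne_top hPg hleg)
        · exact EReal.coe_mul_ne_top ha.le (ne_top_of_le_ne_top hPf hlef)
    _ ≤ a * pressure T f + b * pressure T g := by
        rw [expGrowthSup_rpow ha.le, expGrowthSup_rpow hb.le]
        gcongr

lemma isOpen_dynBall (hT : Continuous T) (x : X) (n : ℕ) (ε : ℝ) : IsOpen (dynBall T x n ε) := by
  have : dynBall T x n ε = ⋂ k ∈ Finset.range n, T^[k] ⁻¹' Metric.ball (T^[k] x) ε := by
    ext y
    simp [dynBall, Metric.mem_ball, dist_comm]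
  rw [this]
  exact isOpen_biInter_finset fun k _ => Metric.isOpen_ball.preimage (hT.iterate k)

lemma mem_dynBall_self (x : X) (n : ℕ) {ε : ℝ} (hε : 0 < ε) : x ∈ dynBall T x n ε :=
  fun k _ => by simpa using hε

lemma IsSep.subset {n : ℕ} {ε : ℝ} {E F : Finset X} (hE : IsSep T n ε E) (hFE : F ⊆ E) :
    IsSep T n ε F :=
  fun x hx y hy => hE x (hFE hx) y (hFE hy)

lemma IsSep.mono_length {n m : ℕ} {ε : ℝ} {E : Finset X} (hE : IsSep T n ε E) (hnm : n ≤ m) :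
    IsSep T m ε E := by
  intro x hx y hy hxy
  obtain ⟨k, hk, hd⟩ := hE x hx y hy hxy
  exact ⟨k, hk.trans_le hnm, hd⟩

lemma card_le_sepSum_one {n : ℕ} {ε : ℝ} {E : Finset X} (hE : IsSep T n ε E) :
    (E.card : ℝ≥0∞) ≤ sepSum T 1 n ε := by
  simpa using sum_le_sepSum (ψ := 1) hE

lemma sepSum_one_le_iff {n : ℕ} {ε : ℝ} {B : ℝ≥0∞} :
    sepSum T 1 n ε ≤ B ↔ ∀ E : Finset X, IsSep T n ε E → (E.card : ℝ≥0∞) ≤ B := by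
  simp [sepSum]

lemma monotone_sepSum_one (ε : ℝ) : Monotone fun n => sepSum T 1 n ε :=
  fun _ _ hnm => sepSum_one_le_iff.2 fun _ hE => card_le_sepSum_one (hE.mono_length hnm)

lemma sepSum_one_zero_le (ε : ℝ) : sepSum T 1 0 ε ≤ 1 := by
  refine sepSum_one_le_iff.2 fun E hE => ?_
  have : E.card ≤ 1 := Finset.card_le_one.2 fun x hx y hy => by
    by_contra hxy
    obtain ⟨k, hk, -⟩ := hE x hx y hy hxy
    exact Nat.not_lt_zero k hk
  exact_mod_cast this

lemma le_of_lt_dist_of_mem_dynBall {z x y : X} {m k : ℕ} {ε : ℝ} (hx : x ∈ dynBall T z m ε)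
    (hy : y ∈ dynBall T z m ε) (hd : 2 * ε < dist (T^[k] x) (T^[k] y)) : m ≤ k := by
  by_contra! hkm
  linarith [hx k hkm, hy k hkm, dist_triangle_left (T^[k] x) (T^[k] y) (T^[k] z)]

/-- Points of an `(n, 2ε)`-separated set lying in one Bowen ball `B_m(z, ε)` can only separate
after time `m`, so `T^[m]` maps them injectively onto an `(n - m, 2ε)`-separated set. -/
lemma card_le_sepSum_one_of_subset_dynBall {n m : ℕ} {ε : ℝ} {z : X} {E : Finset X}
    (hE : IsSep T n (2 * ε) E) (hEz : ∀ x ∈ E, x ∈ dynBall T z m ε) :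
    (E.card : ℝ≥0∞) ≤ sepSum T 1 (n - m) (2 * ε) := by
  classical
  have hsep : ∀ x ∈ E, ∀ y ∈ E, x ≠ y →
      ∃ k, m ≤ k ∧ k < n ∧ 2 * ε < dist (T^[k - m] (T^[m] x)) (T^[k - m] (T^[m] y)) := by
    intro x hx y hy hxy
    obtain ⟨k, hkn, hd⟩ := hE x hx y hy hxy
    have hmk := le_of_lt_dist_of_mem_dynBall (hEz x hx) (hEz y hy) hd
    refine ⟨k, hmk, hkn, ?_⟩
    rwa [← Function.iterate_add_apply, ← Function.iterate_add_apply, Nat.sub_add_cancel hmk]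
  have hinj : Set.InjOn T^[m] E := by
    intro x hx y hy hxy
    by_contra hne
    obtain ⟨k, -, -, hd⟩ := hsep x hx y hy hne
    rw [hxy, dist_self] at hd
    -- now `2 * ε < 0`, so the Bowen ball `B_m(z, ε)` is empty unless `m = 0`
    obtain _ | m := m
    · exact hne hxy
    · linarith [hEz x hx 0 m.succ_pos, dist_nonneg (x := T^[0] z) (y := T^[0] x)]
  rw [← Finset.card_image_of_injOn hinj]
  refine card_le_sepSum_one fun a ha b hb hab => ?_
  obtain ⟨x, hx, rfl⟩ := Finset.mem_image.1 ha
  obtain ⟨y, hy, rfl⟩ := Finset.mem_image.1 hb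
  obtain ⟨k, hmk, hkn, hd⟩ := hsep x hx y hy fun h => hab (h ▸ rfl)
  exact ⟨k - m, by omega, hd⟩

lemma sepSum_one_le_sum_of_cover {ι : Type*} {t : Finset ι} {z : ι → X} {m : ι → ℕ} {ε : ℝ}
    (hcov : ∀ x, ∃ i ∈ t, x ∈ dynBall T (z i) (m i) ε) (n : ℕ) :
    sepSum T 1 n (2 * ε) ≤ ∑ i ∈ t, sepSum T 1 (n - m i) (2 * ε) := by
  classical
  refine sepSum_one_le_iff.2 fun E hE => ?_
  choose g hgt hg using hcov
  rw [Finset.card_eq_sum_card_fiberwise (fun x _ => hgt x), Nat.cast_sum]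
  refine Finset.sum_le_sum fun i _ => card_le_sepSum_one_of_subset_dynBall (z := z i)
    (hE.subset (Finset.filter_subset _ _)) fun x hx => ?_
  rw [← (Finset.mem_filter.1 hx).2]
  exact hg x

lemma sepSum_one_ne_top [CompactSpace X] (hT : Continuous T) (n : ℕ) {ε : ℝ} (hε : 0 < ε) :
    sepSum T 1 n ε ≠ ⊤ := by
  obtain ⟨t, ht⟩ := isCompact_univ.elim_finite_subcover (fun x : X => dynBall T x n (ε / 2))
    (fun x => isOpen_dynBall hT x n _)
    fun x _ => mem_iUnion.2 ⟨x, mem_dynBall_self x n (by positivity)⟩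
  have hcov : ∀ x, ∃ i ∈ t, x ∈ dynBall T i n (ε / 2) := fun x => by simpa using ht (mem_univ x)
  refine ne_top_of_le_ne_top (b := t.card) (ENNReal.natCast_ne_top _) ?_
  calc sepSum T 1 n ε = sepSum T 1 n (2 * (ε / 2)) := by rw [mul_div_cancel₀ ε two_ne_zero]
    _ ≤ ∑ _ ∈ t, sepSum T 1 (n - n) (2 * (ε / 2)) := sepSum_one_le_sum_of_cover hcov n
    _ ≤ ∑ _ ∈ t, 1 := by
        rw [Nat.sub_self]
        exact Finset.sum_le_sum fun _ _ => sepSum_one_zero_le _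
    _ = t.card := by simp

lemma bowenM_anti (Z : Set X) (N : ℕ) (ε : ℝ) : Antitone fun s => bowenM T Z s N ε :=
  fun _ _ hss' => iInf_mono fun _ => iInf_mono fun _ => iInf_mono fun _ =>
    ENNReal.tsum_le_tsum fun _ => ENNReal.ofReal_le_ofReal <| Real.exp_le_exp.2 <|
      neg_le_neg <| mul_le_mul_of_nonneg_right hss' (Nat.cast_nonneg _)

lemma expGrowthSup_sepSum_one_le [CompactSpace X] (hT : Continuous T) {ε s : ℝ} (hε : 0 < ε)
    (hs : 0 ≤ s) (hM : bowenM T univ s 1 ε < 1) :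
    expGrowthSup (fun n => sepSum T 1 n (2 * ε)) ≤ s := by
  simp only [bowenM, iInf_lt_iff] at hM
  obtain ⟨c, hc1, hcov, hsum⟩ := hM
  obtain ⟨t, ht⟩ := isCompact_univ.elim_finite_subcover _ (fun i => isOpen_dynBall hT _ _ _) hcov
  have hb : ∀ m : ℕ,
      (ENNReal.ofReal (Real.exp s) ^ m)⁻¹ = ENNReal.ofReal (Real.exp (-(s * m))) := fun m => by
    rw [← ENNReal.ofReal_pow (Real.exp_pos s).le, ← Real.exp_nat_mul,
      ← ENNReal.ofReal_inv_of_pos (Real.exp_pos _), ← Real.exp_neg, mul_comm]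
  have hgrowth := le_mul_pow_of_le_sum_sub (monotone_sepSum_one (T := T) (2 * ε))
    (t := t) (N := t.sup fun i => (c i).2)
    (fun i hi => ⟨hc1 i, Finset.le_sup (f := fun i => (c i).2) hi⟩)
    (ENNReal.one_le_ofReal.2 (Real.one_le_exp hs)) ENNReal.ofReal_ne_top
    (by simpa only [hb] using ((ENNReal.sum_le_tsum t).trans hsum.le))
    (fun n _ => sepSum_one_le_sum_of_cover (fun x => by simpa using ht (mem_univ x)) n)
  calc expGrowthSup (fun n => sepSum T 1 n (2 * ε))
      ≤ expGrowthSup (fun n => ENNReal.ofReal (Real.exp s) ^ n) :=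
        expGrowthSup_le_of_eventually_le (sepSum_one_ne_top hT _ (by positivity))
          (Eventually.of_forall hgrowth)
    _ = s := by rw [expGrowthSup_pow, ENNReal.log_ofReal_of_pos (Real.exp_pos s), Real.log_exp]

lemma pressure_one_le [CompactSpace X] (hT : Continuous T) :
    pressure T 1 ≤ max (entOf T univ) 0 := by
  rw [pressure_eq_iSup_expGrowthSup]
  refine iSup₂_le fun ε hε => EReal.le_of_forall_lt_iff_le.1 fun z hz => ?_
  have hent : entAt T univ (ε / 2) < z :=
    ((le_iSup₂_of_le (ε / 2) (half_pos hε) le_rfl).trans (le_max_left _ _)).trans_lt hz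
  have hz0 : (0 : ℝ) < z := by exact_mod_cast (le_max_right _ _).trans_lt hz
  obtain ⟨_, ⟨r, rfl, hr⟩, hrz⟩ := sInf_lt_iff.1 hent
  have hM : bowenM T univ (max r 0) 1 (ε / 2) < 1 :=
    calc bowenM T univ (max r 0) 1 (ε / 2) ≤ ⨆ N, bowenM T univ r N (ε / 2) :=
          (bowenM_anti (T := T) univ 1 _ (le_max_left r 0)).trans (le_iSup_of_le 1 le_rfl)
      _ < 1 := by rw [hr]; exact zero_lt_one
  calc expGrowthSup (fun n => sepSum T 1 n ε)
        = expGrowthSup (fun n => sepSum T 1 n (2 * (ε / 2))) := by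
        rw [mul_div_cancel₀ ε two_ne_zero]
    _ ≤ max r 0 := expGrowthSup_sepSum_one_le hT (half_pos hε) (le_max_right _ _) hM
    _ ≤ z := by exact_mod_cast max_le (by exact_mod_cast hrz.le) hz0.le

lemma IsSubAdditivePot.le_pow {ψ : ℕ → X → ℝ} (hψ : IsSubAdditivePot T ψ) {M : ℝ}
    (hM : ∀ x, ψ 1 x ≤ M) (n : ℕ) (x : X) : ψ (n + 1) x ≤ M ^ (n + 1) := by
  induction n generalizing x with
  | zero => simpa using hM x
  | succ n ih =>
    calc ψ (n + 1 + 1) x ≤ ψ 1 x * ψ (n + 1) (T^[1] x) := by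
          rw [add_comm (n + 1)]; exact hψ.2 1 (n + 1) x
      _ ≤ M * M ^ (n + 1) :=
          mul_le_mul (hM x) (ih _) ((hψ.1 _).2 _) (((hψ.1 1).2 x).trans (hM x))
      _ = M ^ (n + 1 + 1) := by ring

lemma IsAsympSubAdditive.exists_le_exp [CompactSpace X] {φ : ℕ → X → ℝ}
    (hφ : IsAsympSubAdditive T φ) : ∃ c : ℝ, ∀ᶠ n : ℕ in atTop, ∀ x, φ n x ≤ Real.exp (c * n) := by
  obtain ⟨ψ, hψ, happrox⟩ := hφ.2 1 one_pos
  obtain ⟨M, hM⟩ := (isCompact_range (hψ.1 1).1).bddAbove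
  have hψM : ∀ n x, 1 ≤ n → ψ n x ≤ max M 1 ^ n := fun n x hn => by
    obtain ⟨n, rfl⟩ := Nat.exists_eq_add_of_le' hn
    exact hψ.le_pow (fun y => (hM ⟨y, rfl⟩).trans (le_max_left M 1)) n x
  refine ⟨Real.log (max M 1) + 2, ?_⟩
  filter_upwards [happrox 2 one_lt_two, eventually_ge_atTop 1] with n hn hn1 x
  obtain ⟨hzero, hlog⟩ := hn x
  rcases ((hφ.1 n).2 x).eq_or_lt with h0 | hφpos
  · rw [← h0]; positivity
  have hψpos : 0 < ψ n x := ((hψ.1 n).2 x).lt_of_ne' fun h => hφpos.ne' (hzero.2 h)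
  have hlogψ : Real.log (ψ n x) ≤ n * Real.log (max M 1) := by
    rw [← Real.log_pow]
    exact Real.log_le_log hψpos (hψM n x hn1)
  rw [← Real.exp_log hφpos, Real.exp_le_exp]
  linarith [(abs_le.1 (hlog hφpos.ne')).2]

lemma exists_forall_le_exp [CompactSpace X] {ι : Type*} [Finite ι] {φ : ι → ℕ → X → ℝ}
    (hφ : ∀ i, IsAsympSubAdditive T (φ i)) :
    ∃ c : ℝ, 0 ≤ c ∧ ∀ᶠ n : ℕ in atTop, ∀ i x, φ i n x ≤ Real.exp (c * n) := by
  have := Fintype.ofFinite ι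
  choose c hc using fun i => (hφ i).exists_le_exp
  refine ⟨∑ i, |c i|, by positivity, (eventually_all.2 hc).mono fun n hn i x => ?_⟩
  refine (hn i x).trans (Real.exp_le_exp.2 (mul_le_mul_of_nonneg_right ?_ n.cast_nonneg))
  exact (le_abs_self _).trans
    (Finset.single_le_sum (fun j _ => abs_nonneg (c j)) (Finset.mem_univ i))

end Potentials

lemma posOrth_eq_pi (k : ℕ) : posOrth k = Set.univ.pi fun _ => Ioi 0 := by
  ext q
  simp [posOrth]

lemma isOpen_posOrth (k : ℕ) : IsOpen (posOrth k) := by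
  rw [posOrth_eq_pi]
  exact isOpen_set_pi Set.finite_univ fun _ _ => isOpen_Ioi

lemma convex_posOrth (k : ℕ) : Convex ℝ (posOrth k) := by
  rw [posOrth_eq_pi]
  exact convex_pi fun _ _ => convex_Ioi 0

lemma add_single_mem_posOrth {k : ℕ} {q : Fin k → ℝ} (hq : q ∈ posOrth k) (i : Fin k) :
    q + Pi.single i 1 ∈ posOrth k := fun j => by
  by_cases h : j = i
  · subst h; simpa using (hq j).trans (lt_add_one _)
  · simpa [h] using hq j

lemma dotp_single {k : ℕ} (a : Fin k → ℝ) (i : Fin k) : dotp a (Pi.single i 1) = a i := by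
  simp [dotp, Pi.single_apply]

section WeightedPressure

variable {X : Type*} [MetricSpace X] {T : X → X} {k : ℕ} {φ : Fin k → ℕ → X → ℝ}

lemma pressure_weightedPot_ne_top [CompactSpace X] (hT : Continuous T)
    (htop : entOf T univ ≠ ⊤) (hφ : ∀ i n x, 0 ≤ φ i n x) {q : Fin k → ℝ} (hq : ∀ i, 0 ≤ q i)
    {c : ℝ} (hc : ∀ᶠ n : ℕ in atTop, ∀ i x, φ i n x ≤ Real.exp (c * n)) :
    pressure T (weightedPot φ q) ≠ ⊤ := by
  have hP1 : pressure T 1 ≠ ⊤ := ne_top_of_le_ne_top (by simp [htop]) (pressure_one_le hT)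
  have hβ : betaBar (weightedPot φ q) ≠ ⊤ :=
    ne_top_of_le_ne_top (EReal.coe_ne_top _) (betaBar_weightedPot_le hφ hq hc)
  rw [← one_mul (weightedPot φ q)]
  exact ne_top_of_le_ne_top (EReal.add_ne_top hP1 hβ)
    (pressure_mul_le (fun _ _ => zero_le_one) (weightedPot_nonneg hφ q) hP1 hβ)

lemma convexOn_of_coe_eq_pressure (hφ : ∀ i n x, 0 ≤ φ i n x) {F : (Fin k → ℝ) → ℝ}
    (hF : ∀ q ∈ posOrth k, (F q : EReal) = pressure T (weightedPot φ q)) :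
    ConvexOn ℝ (posOrth k) F := by
  refine convexOn_iff_forall_pos.2 ⟨convex_posOrth k, fun x hx y hy a b ha hb hab => ?_⟩
  have hP := pressure_rpow_mul_rpow_le (T := T) (weightedPot_nonneg hφ x)
    (weightedPot_nonneg hφ y) ha hb hab (hF x hx ▸ EReal.coe_ne_top _)
    (hF y hy ▸ EReal.coe_ne_top _)
  rw [← weightedPot_smul_add hφ (fun i => (hx i).le) (fun i => (hy i).le) ha.le hb.le,
    ← hF x hx, ← hF y hy, ← hF _ (convex_posOrth k hx hy ha.le hb.le hab)] at hP
  simpa only [smul_eq_mul] using (by exact_mod_cast hP : F (a • x + b • y) ≤ a * F x + b * F y)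

lemma coe_le_betaBar_of_isSubgrad (hφ : ∀ i n x, 0 ≤ φ i n x) {F : (Fin k → ℝ) → ℝ}
    (hF : ∀ q ∈ posOrth k, (F q : EReal) = pressure T (weightedPot φ q)) {q a : Fin k → ℝ}
    (hq : q ∈ posOrth k) (ha : IsSubgrad (posOrth k) F q a) (i : Fin k) :
    (a i : EReal) ≤ betaBar (φ i) := by
  rcases eq_or_ne (betaBar (φ i)) ⊤ with h | h
  · rw [h]; exact le_top
  have hqi := add_single_mem_posOrth hq i
  have hP : (F (q + Pi.single i 1) : EReal) ≤ F q + betaBar (φ i) := by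
    rw [hF _ hqi, hF q hq, weightedPot_add_single hφ fun j => (hq j).le]
    exact pressure_mul_le (weightedPot_nonneg hφ q) (hφ i) (hF q hq ▸ EReal.coe_ne_top _) h
  have hai : a i ≤ F (q + Pi.single i 1) - F q := by
    simpa [dotp_single] using ha _ hqi
  calc (a i : EReal) ≤ (F (q + Pi.single i 1) : EReal) - F q := by exact_mod_cast hai
    _ ≤ betaBar (φ i) :=
        (EReal.sub_le_iff_le_add (.inl (EReal.coe_ne_bot _)) (.inl (EReal.coe_ne_top _))).2
          (hP.trans_eq (add_comm _ _))

end WeightedPressure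

theorem stmt14_general {X : Type*} [MetricSpace X] [CompactSpace X] {k : ℕ}
    (T : X → X) (hT : Continuous T) (φ : Fin k → ℕ → X → ℝ)
    (hφ : ∀ i, IsAsympSubAdditive T (φ i))
    (htop : entOf T Set.univ ≠ ⊤) (hβ : betaBar (sumPot φ) ≠ ⊥) :
    ∃ F : (Fin k → ℝ) → ℝ,
      (∀ q ∈ posOrth k, (F q : EReal) = pressure T (weightedPot φ q)) ∧
      ContinuousOn F (posOrth k) ∧ ConvexOn ℝ (posOrth k) F ∧
      ∀ q ∈ posOrth k, ∀ a : Fin k → ℝ, IsSubgrad (posOrth k) F q a →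
        ∀ i, ((a i : ℝ) : EReal) ≤ betaBar (φ i) := by
  have hφ0 : ∀ i n x, 0 ≤ φ i n x := fun i n x => ((hφ i).1 n).2 x
  obtain ⟨c, hc0, hc⟩ := exists_forall_le_exp hφ
  have hF : ∀ q ∈ posOrth k,
      ((pressure T (weightedPot φ q)).toReal : EReal) = pressure T (weightedPot φ q) :=
    fun q hq => EReal.coe_toReal
      (pressure_weightedPot_ne_top hT htop hφ0 (fun i => (hq i).le) hc)
      (ne_bot_of_le_ne_bot (betaBar_weightedPot_ne_bot hφ0 (fun i => (hq i).le) hc0 hc hβ)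
        (betaBar_le_pressure (weightedPot_nonneg hφ0 q)))
  have hconv := convexOn_of_coe_eq_pressure hφ0 hF
  exact ⟨_, hF, hconv.continuousOn (isOpen_posOrth k), hconv,
    fun q hq a ha => coe_le_betaBar_of_isSubgrad hφ0 hF hq ha⟩

/-- Proposition 3.2: if `h_top(T) < ∞` and `β̄(Φ₁+⋯+Φ_k) > -∞`, then
the pressure function `P_Φ` is real, continuous and convex on the positive orthant,
and every subgradient `a` of `P_Φ` there satisfies `a i ≤ β̄(Φ i)`. -/
theorem stmt14 {X : Type*} [MetricSpace X] [CompactSpace X] [MeasurableSpace X] [BorelSpace X] [Nonempty X] {k : ℕ}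
    (T : X → X) (hT : Continuous T) (φ : Fin k → ℕ → X → ℝ)
    (hφ : ∀ i, IsAsympSubAdditive T (φ i))
    (htop : entOf T Set.univ ≠ ⊤) (hβ : betaBar (sumPot φ) ≠ ⊥) :
    ∃ F : (Fin k → ℝ) → ℝ,
      (∀ q ∈ posOrth k, (F q : EReal) = pressure T (weightedPot φ q)) ∧
      ContinuousOn F (posOrth k) ∧ ConvexOn ℝ (posOrth k) F ∧
      ∀ q ∈ posOrth k, ∀ a : Fin k → ℝ, IsSubgrad (posOrth k) F q a →
        ∀ i, ((a i : ℝ) : EReal) ≤ betaBar (φ i) :=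
  stmt14_general T hT φ hφ htop hβ
end
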